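/- Let G = Aff(ℤ/2kℤ) with k odd, K₀ the even-translation subgroup, 𝒬 the set of quasipolarities, and for L ≤ G with L ⊄ K₀ define C(L) = ∑_{q ∈ 𝒬} ∑_{H ≤ K₀} [L = ⟨H,q⟩] μ(1,H). Then ∑_{J ≤ L, J ⊄ K₀} C(J) = [L ∩ K₀ = 1]. -/

import Mathlib

attribute [local instance] Classical.propDecidable


open Pointwise

def affPerm (n : ℕ) (u : ZMod n) (v : (ZMod n)ˣ) : Equiv.Perm (ZMod n) where
  toFun x := v * x + u
  invFun x := (v⁻¹ : (ZMod n)ˣ) * (x - u)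
  left_inv x := by simp
  right_inv x := by simp

def Aff (n : ℕ) : Subgroup (Equiv.Perm (ZMod n)) where
  carrier := {σ | ∃ u v, σ = affPerm n u v}
  one_mem' := ⟨0, 1, Equiv.ext fun x => by simp [affPerm]⟩
  mul_mem' := by
    rintro σ τ ⟨u1, v1, rfl⟩ ⟨u2, v2, rfl⟩
    exact ⟨v1 * u2 + u1, v1 * v2, Equiv.ext fun x => by
      simp [affPerm, Equiv.Perm.mul_apply, mul_add, mul_assoc, add_assoc]⟩
  inv_mem' := by
    rintro σ ⟨u, v, rfl⟩
    refine ⟨-(↑v⁻¹ * u), v⁻¹, Equiv.ext fun x => ?_⟩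
    simp [affPerm, Equiv.Perm.inv_def, Equiv.symm, mul_sub, sub_eq_add_neg, mul_add, mul_neg]

def AffK0 (n : ℕ) : Subgroup (Equiv.Perm (ZMod n)) where
  carrier := {σ | ∃ u v, Even u ∧ σ = affPerm n u v}
  one_mem' := ⟨0, 1, ⟨0, by simp⟩, Equiv.ext fun x => by simp [affPerm]⟩
  mul_mem' := by
    rintro σ τ ⟨u1, v1, hu1, rfl⟩ ⟨u2, v2, hu2, rfl⟩
    exact ⟨v1 * u2 + u1, v1 * v2, (hu2.mul_left _).add hu1, Equiv.ext fun x => by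
      simp [affPerm, Equiv.Perm.mul_apply, mul_add, mul_assoc, add_assoc]⟩
  inv_mem' := by
    rintro σ ⟨u, v, hu, rfl⟩
    refine ⟨-(↑v⁻¹ * u), v⁻¹, (hu.mul_left _).neg, Equiv.ext fun x => ?_⟩
    simp [affPerm, Equiv.Perm.inv_def, Equiv.symm, mul_sub, sub_eq_add_neg, mul_add, mul_neg]

noncomputable def pφ (k : ℕ) : ZMod (2*k) →+* ZMod 2 := ZMod.castHom ⟨k, rfl⟩ _

lemma unit_image (k : ℕ) (v : (ZMod (2*k))ˣ) : pφ k (v : ZMod (2*k)) = 1 := by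
  obtain ⟨w, hw⟩ := (v.isUnit).map (pφ k)
  have h2 : ∀ a : (ZMod 2)ˣ, (a : ZMod 2) = 1 := by decide
  rw [← hw, h2]

lemma even_iff (k : ℕ) [NeZero (2*k)] (u : ZMod (2*k)) : Even u ↔ pφ k u = 0 := by
  constructor
  · rintro ⟨t, rfl⟩
    have : ∀ a : ZMod 2, a + a = 0 := by decide
    simp [map_add, this]
  · intro h
    have hu : u = ((u.val : ℕ) : ZMod (2*k)) := by simp [ZMod.natCast_val, ZMod.cast_id]
    rw [hu, map_natCast] at h
    obtain ⟨m, hm⟩ := (ZMod.natCast_eq_zero_iff u.val 2).1 h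
    exact ⟨(m : ZMod (2*k)), by rw [hu, hm]; push_cast; ring⟩

lemma affPerm_apply (n : ℕ) (u : ZMod n) (v : (ZMod n)ˣ) (x : ZMod n) :
    affPerm n u v x = v * x + u := rfl

section
variable (k : ℕ) [NeZero (2*k)]

noncomputable def pr (σ  : (Aff (2*k))) : ZMod 2 := pφ k ((σ : Equiv.Perm (ZMod (2*k))) 0)

lemma exists_affPerm (σ  : (Aff (2*k))) : ∃ u v, (σ : Equiv.Perm (ZMod (2*k))) = affPerm (2*k) u v := σ.2

lemma mem_K_iff (σ  : (Aff (2*k))) : σ ∈ (AffK0 (2*k)).subgroupOf (Aff (2*k)) ↔ pr k σ = 0 := by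
  rw [Subgroup.mem_subgroupOf]
  constructor
  · rintro ⟨u, v, hu, hσ⟩
    have : (σ : Equiv.Perm (ZMod (2*k))) 0 = u := by rw [hσ, affPerm_apply]; ring
    rw [pr, this, ← even_iff]; exact hu
  · intro h
    obtain ⟨u, v, hσ⟩ := σ.2
    have h0 : (σ : Equiv.Perm (ZMod (2*k))) 0 = u := by rw [hσ, affPerm_apply]; ring
    exact ⟨u, v, (even_iff k u).2 (by rw [← h0]; exact h), hσ⟩

lemma pr_mul (σ τ  : (Aff (2*k))) : pr k (σ * τ) = pr k σ + pr k τ := by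
  obtain ⟨u1, v1, h1⟩ := σ.2
  obtain ⟨u2, v2, h2⟩ := τ.2
  have hτ0 : (τ : Equiv.Perm (ZMod (2*k))) 0 = u2 := by rw [h2, affPerm_apply]; ring
  have hσ0 : (σ : Equiv.Perm (ZMod (2*k))) 0 = u1 := by rw [h1, affPerm_apply]; ring
  have : ((σ * τ  : (Aff (2*k))) : Equiv.Perm (ZMod (2*k))) 0
      = (σ : Equiv.Perm (ZMod (2*k))) ((τ : Equiv.Perm (ZMod (2*k))) 0) := rfl
  rw [pr, this, hτ0, h1, affPerm_apply, pr, pr, hσ0, hτ0, map_add, map_mul, unit_image,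
    one_mul, add_comm]

lemma pr_one : pr k (1  : (Aff (2*k))) = 0 := by
  have : ((1  : (Aff (2*k))) : Equiv.Perm (ZMod (2*k))) 0 = 0 := rfl
  rw [pr, this, map_zero]

lemma no_fixed_point (σ  : (Aff (2*k))) (hσ : σ ∉ (AffK0 (2*k)).subgroupOf (Aff (2*k))) (x : ZMod (2*k)) :
    (σ : Equiv.Perm (ZMod (2*k))) x ≠ x := by
  intro hx
  obtain ⟨u, v, h⟩ := σ.2
  rw [h, affPerm_apply] at hx
  apply hσ
  rw [mem_K_iff]
  have h0 : (σ : Equiv.Perm (ZMod (2*k))) 0 = u := by rw [h, affPerm_apply]; ring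
  have hu : u = x - v * x := by linear_combination hx
  rw [pr, h0, hu, map_sub, map_mul, unit_image, one_mul, sub_self]
end

section
variable (k : ℕ) [NeZero (2*k)]

lemma fixed_of_invol_mem (hk : Odd k) (σ : (Aff (2*k)))
    (hσ : σ ∈ (AffK0 (2*k)).subgroupOf (Aff (2*k))) (h2 : σ^2 = 1) :
    ∃ x, (σ : Equiv.Perm (ZMod (2*k))) x = x := by
  rw [Subgroup.mem_subgroupOf] at hσ
  obtain ⟨u, v, hu, hs⟩ := hσ
  obtain ⟨t, ht⟩ := hu
  have hp : ∀ x : ZMod (2*k), (v : ZMod (2*k)) * ((v:ZMod (2*k))*x+u)+u = x := by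
    intro x
    have hc : ((σ : Equiv.Perm (ZMod (2*k)))^2) x = x := by
      have : ((σ^2 : (Aff (2*k))) : Equiv.Perm (ZMod (2*k))) = 1 := by rw [h2]; rfl
      rw [SubgroupClass.coe_pow] at this
      rw [this]; rfl
    rw [sq, Equiv.Perm.mul_apply, hs, affPerm_apply, affPerm_apply] at hc
    exact hc
  have hvu : (v : ZMod (2*k)) * u + u = 0 := by
    have := hp 0
    linear_combination this
  have hv2 : (v : ZMod (2*k)) * v = 1 := by
    have := hp 1
    linear_combination this - hvu
  obtain ⟨m, hm⟩ := hk
  have h4c : (4 : ZMod (2*k)) * ((m+1 : ℕ) : ZMod (2*k)) = 2 := by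
    have h1 : ((2*k : ℕ) : ZMod (2*k)) = 0 := ZMod.natCast_self _
    have he : (4 : ZMod (2*k)) * ((m+1:ℕ) : ZMod (2*k)) = ((4*(m+1) : ℕ) : ZMod (2*k)) := by
      push_cast; ring
    rw [he, show 4*(m+1) = 2*k + 2 by omega]
    push_cast
    rw [show ((2:ZMod (2*k)) * (k:ZMod (2*k)) = 0) from by exact_mod_cast h1]
    ring
  set c : ZMod (2*k) := ((m+1 : ℕ) : ZMod (2*k)) with hc
  refine ⟨(t - (v : ZMod (2*k))*t)*c, ?_⟩
  rw [hs, affPerm_apply]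
  subst ht
  linear_combination (-t*c)*hv2 + c*hvu + (-t)*h4c
end

section Main
variable (k : ℕ) [NeZero (2*k)]

lemma qp_not_mem (hk : Odd k) (q : (Aff (2*k))) (h2 : q^2 = 1)
    (hf : ∀ x : ZMod (2*k), q • x ≠ x) : q ∉ (AffK0 (2*k)).subgroupOf (Aff (2*k)) := by
  intro hq
  obtain ⟨x, hx⟩ := fixed_of_invol_mem k hk q hq h2
  exact hf x hx

lemma sq_mem_K (g : (Aff (2*k))) : g^2 ∈ (AffK0 (2*k)).subgroupOf (Aff (2*k)) := by
  rw [mem_K_iff, sq, pr_mul]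
  have : ∀ a : ZMod 2, a + a = 0 := by decide
  exact this _

lemma inv_mul_mem_K (g h : (Aff (2*k))) (hg : g ∉ (AffK0 (2*k)).subgroupOf (Aff (2*k)))
    (hh : h ∉ (AffK0 (2*k)).subgroupOf (Aff (2*k))) :
    g⁻¹ * h ∈ (AffK0 (2*k)).subgroupOf (Aff (2*k)) := by
  rw [mem_K_iff] at hg hh ⊢
  have h1 : pr k g⁻¹ + pr k g = 0 := by
    rw [← pr_mul, inv_mul_cancel, pr_one]
  rw [pr_mul]
  have ha : ∀ a b c : ZMod 2, a + b = 0 → b ≠ 0 → c ≠ 0 → a + c = 0 := by decide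
  exact ha _ _ _ h1 hg hh
end Main

/-- For `k` odd, `G = Aff(ℤ/2kℤ)`, `K₀` the even-translation subgroup and
`C(L) = ∑_{q ∈ 𝒬} ∑_{H ≤ K₀} [L = ⟨H,q⟩] μ(1,H)`, for every `L ≤ G` with `L ⊄ K₀` we have
`∑_{J ≤ L, J ⊄ K₀} C(J) = [L ∩ K₀ = 1]`. -/
theorem stmt_16 (k : ℕ) (hk : Odd k) (hk0 : 0 < k) [NeZero (2 * k)]
    (μ : Subgroup ↥(Aff (2 * k)) → ℤ) (hμ1 : μ ⊥ = 1)
    (hrec : ∀ H : Subgroup ↥(Aff (2 * k)), H ≠ ⊥ →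
      μ H = -∑ K ∈ Finset.univ.filter (fun K : Subgroup ↥(Aff (2 * k)) => K < H), μ K)
    (L : Subgroup ↥(Aff (2 * k))) (hL : ¬ L ≤ (AffK0 (2 * k)).subgroupOf (Aff (2 * k))) :
    (∑ J ∈ Finset.univ.filter (fun J : Subgroup ↥(Aff (2 * k)) =>
        J ≤ L ∧ ¬ J ≤ (AffK0 (2 * k)).subgroupOf (Aff (2 * k))),
      ∑ q ∈ Finset.univ.filter (fun q : ↥(Aff (2 * k)) =>
          q ^ 2 = 1 ∧ ∀ x : ZMod (2 * k), q • x ≠ x),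
        ∑ H ∈ Finset.univ.filter (fun H : Subgroup ↥(Aff (2 * k)) =>
            H ≤ (AffK0 (2 * k)).subgroupOf (Aff (2 * k))),
          if J = H ⊔ Subgroup.zpowers q then μ H else 0) =
      if L ⊓ (AffK0 (2 * k)).subgroupOf (Aff (2 * k)) = ⊥ then 1 else 0 := by
  set K : Subgroup ↥(Aff (2 * k)) := (AffK0 (2 * k)).subgroupOf (Aff (2 * k)) with hK
  -- Möbius: sum over all subgroups of M
  have mob : ∀ M : Subgroup ↥(Aff (2 * k)),
      (∑ H ∈ Finset.univ.filter (fun H => H ≤ M), μ H) = if M = ⊥ then 1 else 0 := by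
    intro M
    by_cases hM : M = ⊥
    · subst hM
      rw [if_pos rfl]
      have : Finset.univ.filter (fun H : Subgroup ↥(Aff (2 * k)) => H ≤ ⊥) = {⊥} := by
        ext J; simp [le_bot_iff]
      rw [this, Finset.sum_singleton, hμ1]
    · rw [if_neg hM]
      have hsplit : Finset.univ.filter (fun H : Subgroup ↥(Aff (2 * k)) => H ≤ M)
          = insert M (Finset.univ.filter (fun H => H < M)) := by
        ext J
        simp only [Finset.mem_filter, Finset.mem_univ, true_and, Finset.mem_insert]
        constructor
        · intro h; rcases eq_or_lt_of_le h with h' | h'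
          · exact Or.inl h'
          · exact Or.inr h'
        · rintro (rfl | h')
          exacts [le_rfl, le_of_lt h']
      rw [hsplit, Finset.sum_insert (by simp [lt_irrefl])]
      rw [hrec M hM]; ring
  set Q := Finset.univ.filter (fun q : ↥(Aff (2 * k)) =>
      q ^ 2 = 1 ∧ ∀ x : ZMod (2 * k), q • x ≠ x) with hQ
  set A := Finset.univ.filter (fun J : Subgroup ↥(Aff (2 * k)) => J ≤ L ∧ ¬ J ≤ K) with hA
  set B := Finset.univ.filter (fun H : Subgroup ↥(Aff (2 * k)) => H ≤ K) with hB
  rw [Finset.sum_comm]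
  have step1 : ∀ q ∈ Q, (∑ J ∈ A, ∑ H ∈ B, if J = H ⊔ Subgroup.zpowers q then μ H else 0)
      = if q ∈ L then (if L ⊓ K = ⊥ then (1:ℤ) else 0) else 0 := by
    intro q hq
    rw [hQ, Finset.mem_filter] at hq
    obtain ⟨-, hq2, hqf⟩ := hq
    have hqK : q ∉ K := qp_not_mem k hk q hq2 hqf
    rw [Finset.sum_comm]
    have inner : ∀ H ∈ B, (∑ J ∈ A, if J = H ⊔ Subgroup.zpowers q then μ H else 0)
        = if (H ≤ L ∧ q ∈ L) then μ H else 0 := by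
      intro H hH
      rw [Finset.sum_ite_eq' A (H ⊔ Subgroup.zpowers q) (fun _ => μ H)]
      have hcond : (H ⊔ Subgroup.zpowers q ∈ A) ↔ (H ≤ L ∧ q ∈ L) := by
        rw [hA, Finset.mem_filter]
        simp only [Finset.mem_univ, true_and]
        constructor
        · rintro ⟨hle, -⟩
          exact ⟨le_trans le_sup_left hle,
            hle (Subgroup.mem_sup_right (Subgroup.mem_zpowers q))⟩
        · rintro ⟨h1, h2⟩
          exact ⟨sup_le h1 (Subgroup.zpowers_le.2 h2),
            fun hc => hqK (hc (Subgroup.mem_sup_right (Subgroup.mem_zpowers q)))⟩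
      rw [if_congr hcond rfl rfl]
    rw [Finset.sum_congr rfl inner]
    by_cases hqL : q ∈ L
    · have hsum : (∑ H ∈ B, if (H ≤ L ∧ q ∈ L) then μ H else 0)
          = ∑ H ∈ Finset.univ.filter (fun H => H ≤ L ⊓ K), μ H := by
        rw [hB, Finset.sum_filter, Finset.sum_filter]
        apply Finset.sum_congr rfl
        intro H _
        by_cases h1 : H ≤ K <;> by_cases h2 : H ≤ L <;>
          simp [h1, h2, le_inf_iff, hqL]
      rw [hsum, mob (L ⊓ K), if_pos hqL]
    · rw [if_neg hqL]
      apply Finset.sum_eq_zero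
      intro H _
      simp [hqL]
  rw [Finset.sum_congr rfl step1]
  by_cases hLK : L ⊓ K = ⊥
  · rw [if_pos hLK]
    obtain ⟨g, hgL, hgK⟩ := SetLike.not_le_iff_exists.1 hL
    have hg2 : g ^ 2 = 1 := by
      have hm : g ^ 2 ∈ L ⊓ K := ⟨pow_mem hgL 2, sq_mem_K k g⟩
      rw [hLK, Subgroup.mem_bot] at hm
      exact hm
    have hgf : ∀ x : ZMod (2 * k), g • x ≠ x := fun x hx => no_fixed_point k g hgK x hx
    have hsingle : Q.filter (fun q => q ∈ L) = {g} := by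
      ext q
      rw [Finset.mem_filter, hQ, Finset.mem_filter]
      simp only [Finset.mem_univ, true_and, Finset.mem_singleton]
      constructor
      · rintro ⟨⟨hq2, hqf⟩, hqL2⟩
        have hqK := qp_not_mem k hk q hq2 hqf
        have hm : q⁻¹ * g ∈ L ⊓ K := ⟨mul_mem (L.inv_mem hqL2) hgL, inv_mul_mem_K k q g hqK hgK⟩
        rw [hLK, Subgroup.mem_bot] at hm
        exact inv_mul_eq_one.1 hm
      · rintro rfl
        exact ⟨⟨hg2, hgf⟩, hgL⟩
    calc (∑ q ∈ Q, if q ∈ L then (1:ℤ) else 0)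
        = ∑ q ∈ Q.filter (fun q => q ∈ L), (1:ℤ) := (Finset.sum_filter _ _).symm
      _ = 1 := by rw [hsingle, Finset.sum_singleton]
  · rw [if_neg hLK]
    apply Finset.sum_eq_zero
    intro q _
    simp [hLK]
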